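/- arXiv:2510.14658 — 3 statements merged into one kernel-verified Lean document; each statement's English description precedes it below -/
import Mathlib

section
/- Universal property of the Dowling lift: let P = (R, G) be a partial field and P' = (R', G') a partial field admitting a strong partial-field homomorphism φ : P → P'. Then there exists a unique strong partial-field homomorphism ψ : DP → P' with ψ ∘ i = φ, where i : P → DP is the canonical inclusion sending p to [X_p]. -/
/-! A homomorphism `ψ : DP → P'` with `ψ ∘ i = φ` is forced on the `X_g`, and on each `Y_q`
because `Y_q (1 - X_q) = 1` in `DP` makes `ψ Y_q` the inverse of `1 - φ q`. Conversely,
`X_g ↦ φ g`, `Y_q ↦ (1 - φ q)⁻¹` kills `J_P`; it maps the distinguished group into `G'` because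
`1 - q` lies in `G` for a fundamental element `q ≠ 1`, so `(1 - φ q)⁻¹ ∈ G'`. -/

/-- The set of elements of a partial field `(R, G)`: the zero element together
with the elements of the subgroup `G` of units. -/
def PFElems (R : Type) [CommRing R] (G : Subgroup Rˣ) : Set R :=
  {x | x = 0 ∨ ∃ u ∈ G, (u : R) = x}

/-- A partial-field homomorphism between partial fields `(R₁, G₁)` and `(R₂, G₂)`. -/
def IsPFHom (R₁ : Type) [CommRing R₁] (G₁ : Subgroup R₁ˣ)
    (R₂ : Type) [CommRing R₂] (G₂ : Subgroup R₂ˣ) (φ : R₁ → R₂) : Prop :=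
  (∀ p ∈ PFElems R₁ G₁, φ p ∈ PFElems R₂ G₂) ∧
  φ 1 = 1 ∧
  (∀ p ∈ PFElems R₁ G₁, ∀ q ∈ PFElems R₁ G₁, φ (p * q) = φ p * φ q) ∧
  (∀ p ∈ PFElems R₁ G₁, ∀ q ∈ PFElems R₁ G₁, p + q ∈ PFElems R₁ G₁ →
    φ p + φ q = φ (p + q))


/-- The fundamental elements of a partial field `(R, G)`: elements `p` such
that both `p` and `1 - p` are elements of the partial field. -/
def PFFund (R : Type) [CommRing R] (G : Subgroup Rˣ) : Set R :=
  {p | p ∈ PFElems R G ∧ (1 - p) ∈ PFElems R G}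
noncomputable section

open MvPolynomial

/-- The index set `Q̄_P` of the indeterminates `Y_p`, one for each fundamental
element `p ∉ {0, 1}` of the partial field (fundamental elements other than
`0` are units lying in `G`). -/
def DIdx (R : Type) [CommRing R] (G : Subgroup Rˣ) : Type :=
  {u : Rˣ // u ∈ G ∧ ((u : R) ∈ PFFund R G) ∧ (u : R) ≠ 1}

/-- The ring `D_P = ℤ[Ḡ][Q̄_P]`: polynomials in the indeterminates `Y_p`
over the group ring `ℤ[Ḡ]` of (a copy of) `G`. -/
def DBase (R : Type) [CommRing R] (G : Subgroup Rˣ) : Type :=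
  MvPolynomial (DIdx R G) (MonoidAlgebra ℤ G)

instance (R : Type) [CommRing R] (G : Subgroup Rˣ) : CommRing (DBase R G) :=
  inferInstanceAs (CommRing (MvPolynomial (DIdx R G) (MonoidAlgebra ℤ G)))

/-- The element `X_g` of `D_P`, for `g ∈ G`: the group-ring basis element
corresponding to `g`, viewed as a constant polynomial. -/
def Xbar (R : Type) [CommRing R] (G : Subgroup Rˣ) (g : G) : DBase R G :=
  MvPolynomial.C (MonoidAlgebra.of ℤ G g)

/-- The ideal `J_P` generated by `X_1 - 1` and `Y_p (1 - X_p) - 1` for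
`p ∈ F(P) \ {0, 1}`. -/
def DIdeal (R : Type) [CommRing R] (G : Subgroup Rˣ) : Ideal (DBase R G) :=
  Ideal.span
    ({Xbar R G 1 - 1} ∪
     {f : DBase R G | ∃ q : DIdx R G,
        f = (X q * (1 - MvPolynomial.C (MonoidAlgebra.of ℤ G ⟨q.1, q.2.1⟩)) - 1 :
          MvPolynomial (DIdx R G) (MonoidAlgebra ℤ G))})

/-- The ring `D_P / J_P` of the Dowling lift `DP`. -/
def DRing (R : Type) [CommRing R] (G : Subgroup Rˣ) : Type :=
  DBase R G ⧸ DIdeal R G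

instance (R : Type) [CommRing R] (G : Subgroup Rˣ) : CommRing (DRing R G) :=
  Ideal.Quotient.commRing (DIdeal R G)

/-- The quotient map `D_P → D_P / J_P`. -/
def dMk (R : Type) [CommRing R] (G : Subgroup Rˣ) : DBase R G →+* DRing R G :=
  Ideal.Quotient.mk (DIdeal R G)

/-- The distinguished group `⟨{-1} ∪ Ḡ ∪ Q̄_P⟩` of the Dowling lift. -/
def DGroup (R : Type) [CommRing R] (G : Subgroup Rˣ) : Subgroup (DRing R G)ˣ :=
  Subgroup.closure {u : (DRing R G)ˣ |
    ((u : DRing R G) = -1) ∨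
    (∃ g : G, (u : DRing R G) = dMk R G (Xbar R G g)) ∨
    ∃ q : DIdx R G, (u : DRing R G) = dMk R G (X q : DBase R G)}

namespace DIdx

variable {R : Type} [CommRing R] {G : Subgroup Rˣ}

def toG (q : DIdx R G) : G := ⟨q.1, q.2.1⟩

lemma exists_coe_eq_one_sub (q : DIdx R G) :
    ∃ w : G, ((w : Rˣ) : R) = 1 - ((q.toG : Rˣ) : R) := by
  obtain ⟨-, h0 | ⟨w, hw, hw_eq⟩⟩ := q.2.2.1
  · exact absurd (sub_eq_zero.mp h0).symm q.2.2.2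
  · exact ⟨⟨w, hw⟩, hw_eq⟩

lemma isUnit_one_sub (q : DIdx R G) : IsUnit (1 - ((q.toG : Rˣ) : R)) := by
  obtain ⟨w, hw⟩ := q.exists_coe_eq_one_sub
  exact hw ▸ (w : Rˣ).isUnit

end DIdx

section Lift

variable {R : Type} [CommRing R] {G : Subgroup Rˣ} {S : Type} [CommRing S] (φ : R →+* S)

def DBase.Y (q : DIdx R G) : DBase R G := X q

lemma dMk_Y_mul_one_sub_Xbar (q : DIdx R G) :
    dMk R G (DBase.Y q) * (1 - dMk R G (Xbar R G q.toG)) = 1 := by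
  have hq : DBase.Y q * (1 - Xbar R G q.toG) - 1 ∈ DIdeal R G :=
    Ideal.subset_span (Or.inr ⟨q, rfl⟩)
  rw [← sub_eq_zero, ← map_one (dMk R G), ← map_sub, ← map_mul, ← map_sub]
  exact Ideal.Quotient.eq_zero_iff_mem.mpr hq

/-- `Ring.inverse` is a genuine inverse here, by `DIdx.isUnit_one_sub`. -/
def DBase.lift : DBase R G →+* S :=
  eval₂Hom (MonoidAlgebra.lift ℤ S G (φ.toMonoidHom.comp ((Units.coeHom R).comp G.subtype)))
    fun q => Ring.inverse (1 - φ ((q.toG : Rˣ) : R))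

lemma DBase.lift_Xbar (g : G) : DBase.lift φ (Xbar R G g) = φ ((g : Rˣ) : R) :=
  (eval₂_C _ _ _).trans (MonoidAlgebra.lift_of _ _)

lemma DBase.lift_Y (q : DIdx R G) :
    DBase.lift φ (DBase.Y q) = Ring.inverse (1 - φ ((q.toG : Rˣ) : R)) :=
  eval₂_X _ _ _

lemma DIdeal_le_ker_lift : DIdeal R G ≤ RingHom.ker (DBase.lift φ) := by
  rw [DIdeal, Ideal.span_le]
  rintro f (rfl | ⟨q, rfl⟩)
  · change DBase.lift φ (Xbar R G 1 - 1) = 0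
    rw [map_sub, DBase.lift_Xbar, map_one, OneMemClass.coe_one, Units.val_one, map_one, sub_self]
  · have hunit : IsUnit (1 - φ ((q.toG : Rˣ) : R)) := by
      simpa only [map_sub, map_one] using q.isUnit_one_sub.map φ
    change DBase.lift φ (DBase.Y q * (1 - Xbar R G q.toG) - 1 : DBase R G) = 0
    rw [map_sub, map_mul, map_sub, map_one, DBase.lift_Y, DBase.lift_Xbar,
      Ring.inverse_mul_cancel _ hunit, sub_self]

def DRing.lift : DRing R G →+* S :=
  Ideal.Quotient.lift (DIdeal R G) (DBase.lift φ) fun _ ha => DIdeal_le_ker_lift φ ha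

lemma DRing.lift_dMk (f : DBase R G) : DRing.lift φ (dMk R G f) = DBase.lift φ f := rfl

lemma DRing.lift_dMk_Xbar (g : G) : DRing.lift φ (dMk R G (Xbar R G g)) = φ ((g : Rˣ) : R) :=
  DBase.lift_Xbar φ g

lemma DRing.ringHom_ext {ψ₁ ψ₂ : DRing R G →+* S}
    (h : ∀ g : G, ψ₁ (dMk R G (Xbar R G g)) = ψ₂ (dMk R G (Xbar R G g))) : ψ₁ = ψ₂ := by
  refine Ideal.Quotient.ringHom_ext (MvPolynomial.ringHom_ext' ?_ fun q => ?_)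
  · exact MonoidAlgebra.ringHom_ext' (RingHom.ext_int _ _) (MonoidHom.ext fun g => h g)
  · have hrel (ψ : DRing R G →+* S) :
        ψ (dMk R G (DBase.Y q)) * (1 - ψ (dMk R G (Xbar R G q.toG))) = 1 := by
      rw [← map_one ψ, ← map_sub, ← map_mul, dMk_Y_mul_one_sub_Xbar]
    have h₁ := hrel ψ₁
    rw [h] at h₁
    exact left_inv_eq_right_inv h₁ ((mul_comm _ _).trans (hrel ψ₂))

lemma DRing.DGroup_le_comap_lift {G' : Subgroup Sˣ} (hG' : (-1 : Sˣ) ∈ G')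
    (hφ : ∀ u : G, ∃ v ∈ G', φ ((u : Rˣ) : R) = ((v : Sˣ) : S)) :
    DGroup R G ≤ G'.comap (Units.map (DRing.lift φ).toMonoidHom) := by
  have mem_of_val_eq {u : (DRing R G)ˣ} {v : Sˣ} (hv : v ∈ G')
      (h : DRing.lift φ (u : DRing R G) = v) :
      u ∈ G'.comap (Units.map (DRing.lift φ).toMonoidHom) := by
    rwa [Subgroup.mem_comap, show Units.map (DRing.lift φ).toMonoidHom u = v from Units.ext h]
  rw [DGroup, Subgroup.closure_le]
  rintro u (hu | ⟨g, hg⟩ | ⟨q, hq⟩)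
  · exact mem_of_val_eq hG' (by rw [hu, map_neg, map_one, Units.val_neg, Units.val_one])
  · obtain ⟨v, hv, hφv⟩ := hφ g
    exact mem_of_val_eq hv (by rw [hg, DRing.lift_dMk_Xbar, hφv])
  · obtain ⟨w, hw⟩ := q.exists_coe_eq_one_sub
    obtain ⟨v, hv, hφv⟩ := hφ w
    have hv' : 1 - φ ((q.toG : Rˣ) : R) = v := by rw [← hφv, hw, map_sub, map_one]
    have hY : DRing.lift φ (dMk R G (DBase.Y q)) = ((v⁻¹ : Sˣ) : S) := by
      rw [DRing.lift_dMk, DBase.lift_Y, hv', Ring.inverse_unit]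
    exact mem_of_val_eq (inv_mem hv) (by rw [hq]; exact hY)

end Lift

theorem stmt15_general (R : Type) [CommRing R] (G : Subgroup Rˣ)
    (R' : Type) [CommRing R'] (G' : Subgroup R'ˣ) (hG' : (-1 : R'ˣ) ∈ G')
    (φ : R →+* R') (hφ : ∀ u : G, ∃ v ∈ G', φ ((u : Rˣ) : R) = ((v : R'ˣ) : R')) :
    ∃! ψ : DRing R G →+* R',
      (∀ u ∈ DGroup R G, ∃ v ∈ G', ψ ((u : (DRing R G)ˣ) : DRing R G) = ((v : R'ˣ) : R')) ∧
      ∀ g : G, ψ (dMk R G (Xbar R G g)) = φ ((g : Rˣ) : R) := by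
  refine ⟨DRing.lift φ, ⟨fun u hu => ?_, DRing.lift_dMk_Xbar φ⟩, fun ψ hψ => ?_⟩
  · exact ⟨_, DRing.DGroup_le_comap_lift φ hG' hφ hu, rfl⟩
  · exact DRing.ringHom_ext fun g => by rw [hψ.2, DRing.lift_dMk_Xbar]

/-- Universal property of the Dowling lift: if `P = (R, G)` and `P' = (R', G')`
are partial fields and `φ : P → P'` is a strong partial-field homomorphism
(a ring homomorphism with `φ(G) ⊆ G'`), then there is a unique strong
partial-field homomorphism `ψ : DP → P'` with `ψ ∘ i = φ`, where
`i : P → DP` is the canonical inclusion sending `g ∈ G` to `[X_g]`. -/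
theorem stmt15 (R : Type) [CommRing R] (G : Subgroup Rˣ) (hG : (-1 : Rˣ) ∈ G)
    (R' : Type) [CommRing R'] (G' : Subgroup R'ˣ) (hG' : (-1 : R'ˣ) ∈ G')
    (φ : R →+* R') (hφ : ∀ u : G, ∃ v ∈ G', φ ((u : Rˣ) : R) = ((v : R'ˣ) : R')) :
    ∃! ψ : DRing R G →+* R',
      (∀ u ∈ DGroup R G, ∃ v ∈ G', ψ ((u : (DRing R G)ˣ) : DRing R G) = ((v : R'ˣ) : R')) ∧
      ∀ g : G, ψ (dMk R G (Xbar R G g)) = φ ((g : Rˣ) : R) :=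
  stmt15_general R G R' G' hG' φ hφ
end
end

section
/- Existence of a partial field with arbitrary prescribed finite strong characteristic set: let S be a finite nonempty set of primes (each p ∈ S prime or p = 0), and let R = ∏_{p ∈ S} Z_p, where Z_p is the prime field of characteristic p (F_p for p prime, Q for p = 0). Then for a field F there exists a ring homomorphism R → F if and only if char F ∈ S. -/
section PiRingHom

variable {ι : Type*} {R : ι → Type*} [∀ i, Semiring (R i)] {F : Type*} [Semiring F]
  [IsLeftCancelMulZero F] [Nontrivial F]

/-- The `Pi.single i 1` are idempotents summing to `1`; their images are idempotents of a domain
summing to `1`, so one of them is `1`. -/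
theorem RingHom.exists_map_single_one_eq_one [Fintype ι] [DecidableEq ι]
    (φ : (∀ i, R i) →+* F) : ∃ i, φ (Pi.single i 1) = 1 := by
  have hsum : ∑ i, φ (Pi.single i 1) = 1 := by
    rw [← map_sum, Finset.univ_sum_single]
    exact map_one φ
  obtain ⟨i, -, hi⟩ := Finset.exists_ne_zero_of_sum_ne_zero (hsum ▸ one_ne_zero)
  have hidem : IsIdempotentElem (φ (Pi.single i 1)) := by
    rw [IsIdempotentElem, ← map_mul, ← Pi.single_mul, mul_one]
  exact ⟨i, (IsIdempotentElem.iff_eq_zero_or_one.mp hidem).resolve_left hi⟩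

theorem nonempty_piRingHom_iff [Finite ι] :
    Nonempty ((∀ i, R i) →+* F) ↔ ∃ i, Nonempty (R i →+* F) := by
  classical
  cases nonempty_fintype ι
  refine ⟨fun ⟨φ⟩ ↦ ?_, fun ⟨i, ⟨g⟩⟩ ↦ ⟨g.comp (Pi.evalRingHom R i)⟩⟩
  obtain ⟨i, hi⟩ := φ.exists_map_single_one_eq_one
  exact ⟨i, ⟨{
    toFun := fun x ↦ φ (Pi.single i x),
    map_one' := hi,
    map_mul' := fun x y ↦ by rw [Pi.single_mul, map_mul],
    map_zero' := by rw [Pi.single_zero, map_zero],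
    map_add' := fun x y ↦ by rw [Pi.single_add, map_add] }⟩⟩

end PiRingHom

theorem RingHom.ringChar_eq_of_injective {R A : Type*} [NonAssocSemiring R] [NonAssocSemiring A]
    (f : R →+* A) (hf : Function.Injective f) : ringChar A = ringChar R :=
  ringChar.eq_iff.mpr (charP_of_injective_ringHom hf (ringChar R))

theorem ringChar_eq_of_nonempty_ringEquiv {K : Type*} [Ring K] {p : ℕ}
    (hK : if p = 0 then Nonempty (K ≃+* ℚ) else Nonempty (K ≃+* ZMod p)) :
    ringChar K = p := by
  split_ifs at hK with hp
  · obtain ⟨e⟩ := hK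
    rw [e.symm.toRingHom.ringChar_eq_of_injective e.symm.injective, hp,
      CharP.ringChar_zero_iff_CharZero]
    infer_instance
  · obtain ⟨e⟩ := hK
    rw [e.symm.toRingHom.ringChar_eq_of_injective e.symm.injective, ZMod.ringChar_zmod_n]

theorem nonempty_ringHom_iff_ringChar_eq {K F : Type*} [DivisionRing K] [DivisionRing F] {p : ℕ}
    (hK : if p = 0 then Nonempty (K ≃+* ℚ) else Nonempty (K ≃+* ZMod p)) :
    Nonempty (K →+* F) ↔ ringChar F = p := by
  refine ⟨fun ⟨f⟩ ↦ (f.ringChar_eq_of_injective f.injective).trans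
    (ringChar_eq_of_nonempty_ringEquiv hK), fun hF ↦ ?_⟩
  split_ifs at hK with hp
  · obtain ⟨e⟩ := hK
    have : CharZero F := (CharP.ringChar_zero_iff_CharZero (R := F)).mp (hF.trans hp)
    exact ⟨(Rat.castHom F).comp e.toRingHom⟩
  · obtain ⟨e⟩ := hK
    have : CharP F p := ringChar.of_eq hF
    exact ⟨(ZMod.castHom dvd_rfl F).comp e.toRingHom⟩

theorem stmt18_general (S : Finset ℕ)
    (K : ℕ → Type) [∀ p, Field (K p)]
    (hK : ∀ p ∈ S, if p = 0 then Nonempty (K p ≃+* ℚ) else Nonempty (K p ≃+* ZMod p))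
    (F : Type) [Field F] :
    Nonempty ((∀ p : S, K p) →+* F) ↔ ringChar F ∈ S := by
  rw [nonempty_piRingHom_iff]
  constructor
  · rintro ⟨p, hp⟩
    rw [(nonempty_ringHom_iff_ringChar_eq (hK p p.2)).mp hp]
    exact p.2
  · intro hF
    exact ⟨⟨_, hF⟩, (nonempty_ringHom_iff_ringChar_eq (hK _ hF)).mpr rfl⟩

/-- Let `S` be a finite nonempty set of characteristics (each element `0` or a
prime) and `R = ∏_{p ∈ S} Z_p`, where `Z_p` is the prime field of
characteristic `p` (i.e. `Z_p ≅ ℚ` if `p = 0` and `Z_p ≅ ZMod p` if `p` is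
prime). Then for any field `F`, there is a ring homomorphism `R → F` iff the
characteristic of `F` belongs to `S`. -/
theorem stmt18 (S : Finset ℕ) (hS : S.Nonempty)
    (hSp : ∀ p ∈ S, p = 0 ∨ Nat.Prime p)
    (K : ℕ → Type) [∀ p, Field (K p)]
    (hK : ∀ p ∈ S, if p = 0 then Nonempty (K p ≃+* ℚ) else Nonempty (K p ≃+* ZMod p))
    (F : Type) [Field F] :
    Nonempty ((∀ p : S, K p) →+* F) ↔ ringChar F ∈ S :=
  stmt18_general S K hK F
end

section
/- If S is an infinite set of primes not containing 0 and for each p ∈ S there is a field F_p of characteristic p with a partial-field homomorphism f_p : P → F_p, then there exists a field F of characteristic 0 together with a partial-field homomorphism P → F; consequently no partial field has weak characteristic set equal to an infinite set of primes omitting 0. -/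

private theorem auxchar (F : Type) [Field F] (h : ∀ n : ℕ, n ≠ 0 → (n : F) ≠ 0) :
    ringChar F = 0 := by
  haveI : CharZero F := charZero_of_inj_zero fun n hn => by
    by_contra h0
    exact h n h0 hn
  exact ringChar.eq_zero

private theorem auxhom (R : Type) [CommRing R] (G : Subgroup Rˣ) (A : Type) [CommRing A]
    (F : Type) [Field F] (g : A →+* F) (Φ : R → A)
    (h1 : Φ 1 = 1)
    (hm : ∀ p ∈ PFElems R G, ∀ q ∈ PFElems R G, Φ (p * q) = Φ p * Φ q)
    (hadd : ∀ p ∈ PFElems R G, ∀ q ∈ PFElems R G, p + q ∈ PFElems R G →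
      Φ p + Φ q = Φ (p + q)) :
    IsPFHom R G F (⊤ : Subgroup Fˣ) (fun x => g (Φ x)) := by
  refine ⟨?_, ?_, ?_, ?_⟩
  · intro p _
    by_cases h : g (Φ p) = 0
    · exact Or.inl h
    · obtain ⟨w, hw⟩ := isUnit_iff_ne_zero.mpr h
      exact Or.inr ⟨w, Subgroup.mem_top w, hw⟩
  · show g (Φ 1) = 1
    rw [h1, map_one]
  · intro p hp q hq
    show g (Φ (p * q)) = g (Φ p) * g (Φ q)
    rw [hm p hp q hq, map_mul]
  · intro p hp q hq hpq
    show g (Φ p) + g (Φ q) = g (Φ (p + q))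
    rw [← map_add, hadd p hp q hq hpq]

/-- If `S` is an infinite set of primes (not containing `0`) and for each
`p ∈ S` there are a field `Fp p` of characteristic `p` and a partial-field
homomorphism `(R, G) → (Fp p, (Fp p)ˣ)`, then there exist a field `F` of
characteristic `0` and a partial-field homomorphism `(R, G) → (F, Fˣ)`.
Consequently no partial field has weak characteristic set equal to an
infinite set of primes omitting `0`. -/
theorem stmt19 (R : Type) [CommRing R] (G : Subgroup Rˣ) (hG : (-1 : Rˣ) ∈ G)
    (S : Set ℕ) (hS : S.Infinite) (hSp : ∀ p ∈ S, Nat.Prime p)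
    (Fp : ℕ → Type) [∀ p, Field (Fp p)] (hchar : ∀ p ∈ S, CharP (Fp p) p)
    (f : ∀ p, R → Fp p)
    (hf : ∀ p ∈ S, IsPFHom R G (Fp p) (⊤ : Subgroup (Fp p)ˣ) (f p)) :
    ∃ (F : Type) (_ : Field F),
      ringChar F = 0 ∧ ∃ φ : R → F, IsPFHom R G F (⊤ : Subgroup Fˣ) φ := by
  classical
  haveI : Infinite ↥S := hS.to_subtype
  -- the ideal of finitely supported elements of the product ring
  let I : Ideal (Π i : S, Fp i) :=
  { carrier := {a | {i | a i ≠ 0}.Finite}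
    add_mem' := by
      intro a b ha hb
      refine (ha.union hb).subset ?_
      intro i hi
      by_contra h
      simp only [Set.mem_union, Set.mem_setOf_eq, not_or, not_not] at h
      simp only [Set.mem_setOf_eq, Pi.add_apply, h.1, h.2, add_zero, ne_eq,
        not_true] at hi
    zero_mem' := by simp
    smul_mem' := by
      intro c a ha
      refine ha.subset ?_
      intro i hi h
      apply hi
      show c i • a i = 0
      simp [h] }
  have hI : I ≠ ⊤ := by
    intro h
    have h1 : (1 : Π i : S, Fp i) ∈ I := h ▸ Submodule.mem_top
    have : {i : S | (1 : Π i : S, Fp i) i ≠ 0}.Finite := h1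
    simp only [Pi.one_apply, ne_eq, one_ne_zero, not_false_iff,
      Set.setOf_true] at this
    exact Set.infinite_univ this
  obtain ⟨M, hM, hIM⟩ := Ideal.exists_le_maximal I hI
  haveI := hM
  -- the key nonvanishing of naturals in the quotient
  have hne : ∀ n : ℕ, n ≠ 0 →
      Ideal.Quotient.mk M ((n : ℕ) : Π i : S, Fp i) ≠ 0 := by
    intro n hn0 hn
    have hpos : 0 < n := Nat.pos_of_ne_zero hn0
    have hmem : ((n : ℕ) : Π i : S, Fp i) ∈ M :=
      Ideal.Quotient.eq_zero_iff_mem.mp hn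
    set u : Π i : S, Fp i := fun i => if ((n : Fp i) = 0) then 1 else (n : Fp i)
      with hu_def
    have hu : IsUnit u := by
      rw [isUnit_iff_exists_inv]
      refine ⟨fun i => (u i)⁻¹, ?_⟩
      funext i
      have : u i ≠ 0 := by
        by_cases h : ((n : Fp i) = 0) <;> simp [hu_def, h]
      simp [Pi.mul_apply, mul_inv_cancel₀ this]
    have hv : ((n : ℕ) : Π i : S, Fp i) - u ∈ I := by
      have hsub : {i : S | (((n : ℕ) : Π i : S, Fp i) - u) i ≠ 0} ⊆
          (Subtype.val : S → ℕ) ⁻¹' {m : ℕ | m ∣ n} := by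
        intro i hi
        simp only [Set.mem_setOf_eq, Pi.sub_apply, Pi.natCast_apply] at hi
        by_cases h : ((n : Fp i) = 0)
        · haveI := hchar i.1 i.2
          exact (CharP.cast_eq_zero_iff (Fp i) i n).mp h
        · exact absurd (by simp [hu_def, h]) hi
      refine Set.Finite.subset ?_ hsub
      have hdiv : {m : ℕ | m ∣ n}.Finite :=
        (Set.finite_Iic n).subset (fun m hm => Nat.le_of_dvd hpos hm)
      exact Set.Finite.preimage (Set.injOn_of_injective Subtype.val_injective)
        hdiv
    have hu_mem : u ∈ M := by
      have : ((n : ℕ) : Π i : S, Fp i) - (((n : ℕ) : Π i : S, Fp i) - u) ∈ M :=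
        M.sub_mem hmem (hIM hv)
      simpa using this
    exact hM.ne_top (M.eq_top_of_isUnit_mem hu_mem hu)
  refine ⟨(Π i : S, Fp i) ⧸ M, Ideal.Quotient.field M, ?_, ?_⟩
  · refine @auxchar _ (Ideal.Quotient.field M) ?_
    intro n hn h0
    have h0' : ((n : ℕ) : (Π i : S, Fp i) ⧸ M) = 0 := h0
    rw [← map_natCast (Ideal.Quotient.mk M) n] at h0'
    exact hne n hn h0'
  · refine ⟨fun x => Ideal.Quotient.mk M (fun i => f i x), ?_⟩
    have h1 : (fun x : R => (fun i : S => f i x)) 1 = 1 := by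
      funext i
      exact (hf i i.2).2.1
    have hm : ∀ p ∈ PFElems R G, ∀ q ∈ PFElems R G,
        (fun i : S => f i (p * q)) = (fun i : S => f i p) * (fun i : S => f i q) := by
      intro p hp q hq
      funext i
      exact (hf i i.2).2.2.1 p hp q hq
    have hadd : ∀ p ∈ PFElems R G, ∀ q ∈ PFElems R G, p + q ∈ PFElems R G →
        (fun i : S => f i p) + (fun i : S => f i q) = (fun i : S => f i (p + q)) := by
      intro p hp q hq hpq
      funext i
      exact (hf i i.2).2.2.2 p hp q hq hpq
    exact @auxhom R _ G (Π i : S, Fp i) _ ((Π i : S, Fp i) ⧸ M)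
      (Ideal.Quotient.field M) (Ideal.Quotient.mk M) (fun x i => f i x) h1 hm hadd
end
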